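/- Let E be a 2-coloured graph and let w ∈ BS(2,1)⁺. Every coloured-graph morphism λ : E_w → E has a traversal: there exists a path x ∈ E* such that x traverses λ. -/

import Mathlib

/-- The single defining relation of `BS(2,1)⁺`: `a·b·b ~ b·a`
(generator `false` is `a`, generator `true` is `b`). -/
def bsStep : FreeMonoid Bool → FreeMonoid Bool → Prop := fun x y =>
  x = .of false * .of true * .of true ∧ y = .of true * .of false

/-- The Baumslag–Solitar monoid `BS(2,1)⁺ = ⟨a, b ∣ a b² = b a⟩`. -/
abbrev BS : Type := PresentedMonoid bsStep

/-- The generator `a` of `BS(2,1)⁺`. -/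
def BSa : BS := PresentedMonoid.of bsStep false

/-- The generator `b` of `BS(2,1)⁺`. -/
def BSb : BS := PresentedMonoid.of bsStep true

/-- The defining relation `a b² = b a` in `BS(2,1)⁺`. -/
theorem bs_rel : BSa * BSb * BSb = BSb * BSa :=
  Quotient.sound (ConGen.Rel.of _ _ ⟨rfl, rfl⟩)

/-- The generator of `BS(2,1)⁺` corresponding to a colour. -/
def bsGen : Bool → BS
  | false => BSa
  | true => BSb

/-- A 2-coloured graph: a directed graph `(E⁰, E¹, r, s)` together with a colour map
`c : E¹ → Bool` (`false` is the first colour, `true` the second). -/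
structure TwoColouredGraph where
  V : Type
  Edge : Type
  r : Edge → V
  s : Edge → V
  c : Edge → Bool

/-- A coloured-graph morphism: a graph morphism preserving colours. -/
structure CGMor (F E : TwoColouredGraph) where
  onV : F.V → E.V
  onE : F.Edge → E.Edge
  map_r : ∀ e, E.r (onE e) = onV (F.r e)
  map_s : ∀ e, E.s (onE e) = onV (F.s e)
  map_c : ∀ e, E.c (onE e) = F.c e

/-- `x` is a path (finite sequence of composable edges) with range `v`;
vertices are regarded as the paths of length 0. -/
def IsPathFrom (E : TwoColouredGraph) (v : E.V) (x : List E.Edge) : Prop :=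
  (∀ e ∈ x.head?, E.r e = v) ∧ List.Chain' (fun e f => E.s e = E.r f) x

/-- The model 2-coloured graph `E_w` for `w ∈ BS(2,1)⁺`: vertices are the left divisors
of `w`, and there is an edge `(z, z·l)` of colour `l` whenever `z` and `z·l` divide `w`. -/
def bsModel (w : BS) : TwoColouredGraph where
  V := {z : BS // z ∣ w}
  Edge := {p : BS × Bool // p.1 ∣ w ∧ p.1 * bsGen p.2 ∣ w}
  r e := ⟨e.1.1, e.2.1⟩
  s e := ⟨e.1.1 * bsGen e.1.2, e.2.2⟩
  c e := e.1.2

/-- The degree `d*(x) ∈ BS(2,1)⁺` of a path: the product of the generators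
corresponding to the colours of its edges. -/
def pathDegBS (E : TwoColouredGraph) (x : List E.Edge) : BS :=
  (x.map fun e => bsGen (E.c e)).prod

theorem pathDegBS_take_mul_drop (E : TwoColouredGraph) (x : List E.Edge) (n : ℕ) :
    pathDegBS E (x.take n) * pathDegBS E (x.drop n) = pathDegBS E x := by
  unfold pathDegBS
  rw [← List.prod_append, ← List.map_append, List.take_append_drop]

theorem pathDegBS_take_dvd (E : TwoColouredGraph) (x : List E.Edge) (n : ℕ) :
    pathDegBS E (x.take n) ∣ pathDegBS E x :=
  ⟨pathDegBS E (x.drop n), (pathDegBS_take_mul_drop E x n).symm⟩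

theorem pathDegBS_take_mul_gen_dvd (E : TwoColouredGraph) (x : List E.Edge) (n : ℕ)
    (hn : n < x.length) :
    pathDegBS E (x.take n) * bsGen (E.c (x.get ⟨n, hn⟩)) ∣ pathDegBS E x := by
  refine ⟨pathDegBS E (x.drop (n + 1)), ?_⟩
  rw [mul_assoc, ← pathDegBS_take_mul_drop E x n]
  congr 1
  have h := List.drop_eq_getElem_cons hn
  rw [pathDegBS, pathDegBS, h, List.map_cons, List.prod_cons, List.get_eq_getElem]

/-- `x` (a path with range `v`) traverses the coloured-graph morphism `λ : E_w → E`. -/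
def TraversesBS (E : TwoColouredGraph) {w : BS} (lam : CGMor (bsModel w) E)
    (v : E.V) (x : List E.Edge) : Prop :=
  ∃ hd : pathDegBS E x = w,
    lam.onV ⟨1, one_dvd w⟩ = v ∧
    ∀ (n : ℕ) (hn : n < x.length),
      lam.onE ⟨(pathDegBS E (x.take n), E.c (x.get ⟨n, hn⟩)),
        hd ▸ pathDegBS_take_dvd E x n,
        hd ▸ pathDegBS_take_mul_gen_dvd E x n hn⟩ = x.get ⟨n, hn⟩

/-- The restriction `λ|_{E_{w₁}}` of `λ : E_w → E` along a divisor `w₁ ∣ w`. -/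
def restrictBS {E : TwoColouredGraph} {w : BS} (lam : CGMor (bsModel w) E)
    (w₁ : BS) (h : w₁ ∣ w) : CGMor (bsModel w₁) E where
  onV z := lam.onV ⟨z.1, z.2.trans h⟩
  onE e := lam.onE ⟨e.1, e.2.1.trans h, e.2.2.trans h⟩
  map_r e := lam.map_r _
  map_s e := lam.map_s _
  map_c e := lam.map_c _

/-- The translated restriction `λ|*_{[w₁, w₁w₂]} : E_{w₂} → E`, `z ↦ λ(w₁ z)`,
of `λ : E_w → E` where `w = w₁ w₂`. -/
def starRestrictBS {E : TwoColouredGraph} {w : BS} (lam : CGMor (bsModel w) E)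
    (w₁ w₂ : BS) (h : w = w₁ * w₂) : CGMor (bsModel w₂) E where
  onV z := lam.onV ⟨w₁ * z.1, (mul_dvd_mul_left w₁ z.2).trans (dvd_of_eq h.symm)⟩
  onE e := lam.onE ⟨(w₁ * e.1.1, e.1.2),
    (mul_dvd_mul_left w₁ e.2.1).trans (dvd_of_eq h.symm),
    by rw [mul_assoc]; exact (mul_dvd_mul_left w₁ e.2.2).trans (dvd_of_eq h.symm)⟩
  map_r e := lam.map_r _
  map_s e := by
    exact (lam.map_s _).trans
      (congrArg lam.onV (Subtype.ext (mul_assoc w₁ e.1.1 (bsGen e.1.2))))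
  map_c e := lam.map_c _

/-- A square in `E`: a coloured-graph morphism `φ : E_{ba} → E`. -/
abbrev SquareBS (E : TwoColouredGraph) := CGMor (bsModel (BSb * BSa)) E

theorem dvd_a_ba : BSa ∣ BSb * BSa := ⟨BSb * BSb, by rw [← mul_assoc, bs_rel]⟩
theorem dvd_ab_ba : BSa * BSb ∣ BSb * BSa := ⟨BSb, bs_rel.symm⟩
theorem dvd_b_ba : BSb ∣ BSb * BSa := ⟨BSa, rfl⟩

/-- The edge `(e, a)` of `E_{ba}`. -/
def sqEdge_e_a : (bsModel (BSb * BSa)).Edge :=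
  ⟨(1, false), one_dvd _, by rw [one_mul]; exact dvd_a_ba⟩

/-- The edge `(a, ab)` of `E_{ba}`. -/
def sqEdge_a_ab : (bsModel (BSb * BSa)).Edge := ⟨(BSa, true), dvd_a_ba, dvd_ab_ba⟩

/-- The edge `(ab, ab²)` of `E_{ba}`. -/
def sqEdge_ab_abb : (bsModel (BSb * BSa)).Edge := ⟨(BSa * BSb, true), dvd_ab_ba, dvd_of_eq bs_rel⟩

/-- The edge `(e, b)` of `E_{ba}`. -/
def sqEdge_e_b : (bsModel (BSb * BSa)).Edge :=
  ⟨(1, true), one_dvd _, by rw [one_mul]; exact dvd_b_ba⟩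

/-- The edge `(b, ba)` of `E_{ba}`. -/
def sqEdge_b_ba : (bsModel (BSb * BSa)).Edge := ⟨(BSb, false), dvd_b_ba, dvd_refl _⟩

/-- A collection `C` of squares in `E` is complete if every `c_a c_b c_b`-coloured path is
the top-plus-right side of a unique square in `C`, and every `c_b c_a`-coloured path is
the left-plus-bottom side of a unique square in `C`. -/
def IsCompleteBS (E : TwoColouredGraph) (C : Set (SquareBS E)) : Prop :=
  (∀ x₁ x₂ x₃ : E.Edge, E.s x₁ = E.r x₂ → E.s x₂ = E.r x₃ →
      E.c x₁ = false → E.c x₂ = true → E.c x₃ = true →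
      ∃! φ : SquareBS E, φ ∈ C ∧ x₁ = φ.onE sqEdge_e_a ∧ x₂ = φ.onE sqEdge_a_ab ∧
        x₃ = φ.onE sqEdge_ab_abb) ∧
  (∀ y₁ y₂ : E.Edge, E.s y₁ = E.r y₂ → E.c y₁ = true → E.c y₂ = false →
      ∃! φ : SquareBS E, φ ∈ C ∧ y₁ = φ.onE sqEdge_e_b ∧ y₂ = φ.onE sqEdge_b_ba)

/-- The square `φ` occurs in `λ : E_w → E` if there is an `m ∈ BS(2,1)⁺` such that `φ` is the
translated restriction of `λ` to the copy `[m, m·ba]` of `E_{ba}` inside `E_w`. -/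
def OccursBS {E : TwoColouredGraph} {w : BS} (φ : SquareBS E) (lam : CGMor (bsModel w) E) : Prop :=
  ∃ (m : BS) (h : m * (BSb * BSa) ∣ w),
    (∀ z : (bsModel (BSb * BSa)).V,
      lam.onV ⟨m * z.1, (mul_dvd_mul_left m z.2).trans h⟩ = φ.onV z) ∧
    (∀ e : (bsModel (BSb * BSa)).Edge,
      lam.onE ⟨(m * e.1.1, e.1.2), (mul_dvd_mul_left m e.2.1).trans h,
        by rw [mul_assoc]; exact (mul_dvd_mul_left m e.2.2).trans h⟩ = φ.onE e)

/-- `λ` is `C`-compatible if every square occurring in `λ` belongs to `C`. -/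
def CompatibleBS {E : TwoColouredGraph} (C : Set (SquareBS E)) {w : BS}
    (lam : CGMor (bsModel w) E) : Prop :=
  ∀ φ : SquareBS E, OccursBS φ lam → φ ∈ C

/-- The monoid homomorphism `BS(2,1)⁺ → (ℕ, ×)` killing both generators. -/
def bsToNat : BS →* ℕ :=
  PresentedMonoid.lift (fun _ => (0 : ℕ)) (by
    rintro x y ⟨hx, hy⟩
    subst hx; subst hy
    simp)

theorem bsToNat_gen (l : Bool) : bsToNat (bsGen l) = 0 := by
  cases l <;> rfl

/-- The model graph `E_e` over the identity of `BS(2,1)⁺` has no edges. -/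
theorem bsModel_one_no_edge (e : (bsModel 1).Edge) : False := by
  obtain ⟨u, hu⟩ := e.2.2
  have h := congrArg bsToNat hu
  rw [map_one, map_mul, map_mul, bsToNat_gen, mul_zero, zero_mul] at h
  exact one_ne_zero h

/-- The identity morphism `λ_v : E_e → E`, `λ_v(e) = v`. -/
def idMorBS (E : TwoColouredGraph) (v : E.V) : CGMor (bsModel 1) E where
  onV _ := v
  onE e := (bsModel_one_no_edge e).elim
  map_r e := (bsModel_one_no_edge e).elim
  map_s e := (bsModel_one_no_edge e).elim
  map_c e := (bsModel_one_no_edge e).elim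

theorem idMorBS_compatible (E : TwoColouredGraph) (C : Set (SquareBS E)) (v : E.V) :
    CompatibleBS C (idMorBS E v) := by
  rintro φ ⟨m, h, -, -⟩
  obtain ⟨u, hu⟩ := h
  have h1 := congrArg bsToNat hu
  rw [map_one, map_mul, map_mul, map_mul] at h1
  rw [show bsToNat BSb = 0 from rfl] at h1
  simp at h1

/-- The set `Λ = ⋃_{w} Λ^w` of all `C`-compatible coloured-graph morphisms into `E`. -/
def LamBS (E : TwoColouredGraph) (C : Set (SquareBS E)) : Type :=
  Σ w : BS, {lam : CGMor (bsModel w) E // CompatibleBS C lam}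

/-- The degree `d(λ) = w` of `λ : E_w → E`. -/
def LamBS.deg {E : TwoColouredGraph} {C : Set (SquareBS E)} (α : LamBS E C) : BS := α.1

/-- The range `r(λ) = λ(e)`. -/
def LamBS.rV {E : TwoColouredGraph} {C : Set (SquareBS E)} (α : LamBS E C) : E.V :=
  α.2.1.onV ⟨1, one_dvd α.1⟩

/-- The source `s(λ) = λ(w)`. -/
def LamBS.sV {E : TwoColouredGraph} {C : Set (SquareBS E)} (α : LamBS E C) : E.V :=
  α.2.1.onV ⟨α.1, dvd_refl α.1⟩

/-- The identity `λ_v` as an element of `Λ`. -/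
def idLamBS (E : TwoColouredGraph) (C : Set (SquareBS E)) (v : E.V) : LamBS E C :=
  ⟨1, idMorBS E v, idMorBS_compatible E C v⟩

/-- `γ` is the composition `αβ`, i.e. `d(γ) = d(α)d(β)`, `γ|_{E_{d(α)}} = α` and
`γ|*_{[d(α), d(α)d(β)]} = β`. -/
def IsCompBS {E : TwoColouredGraph} {C : Set (SquareBS E)} (α β γ : LamBS E C) : Prop :=
  ∃ h : γ.1 = α.1 * β.1,
    restrictBS γ.2.1 α.1 ⟨β.1, h⟩ = α.2.1 ∧ starRestrictBS γ.2.1 α.1 β.1 h = β.2.1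

theorem eq_uabb_uba (u : BS) : u * BSa * BSb * BSb = u * BSb * BSa := by
  rw [mul_assoc (u * BSa) BSb BSb, mul_assoc u BSa (BSb * BSb), ← mul_assoc BSa BSb BSb,
    bs_rel, ← mul_assoc]

theorem dvd_u_uba (u : BS) : u ∣ u * BSb * BSa :=
  dvd_mul_of_dvd_left (dvd_mul_right u BSb) BSa

theorem dvd_ua_uba (u : BS) : u * BSa ∣ u * BSb * BSa :=
  ⟨BSb * BSb, by rw [← mul_assoc, eq_uabb_uba]⟩

theorem dvd_uab_uba (u : BS) : u * BSa * BSb ∣ u * BSb * BSa := ⟨BSb, (eq_uabb_uba u).symm⟩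

/-! Writing `w` as a word in the generators, the word spells out a path in the model graph `E_w`
starting at the vertex `e`; its image under `λ` traverses `λ`, because in `E_w` the range of the
`n`-th edge of a path starting at `e` is forced to be the degree of the first `n` edges. -/

theorem bsGen_eq_of : bsGen = PresentedMonoid.of bsStep := by
  funext l
  cases l <;> rfl

theorem BS.induction_on_gen_mul {motive : BS → Prop} (v : BS) (one : motive 1)
    (gen_mul : ∀ l v, motive v → motive (bsGen l * v)) : motive v :=
  Submonoid.induction_of_closure_eq_top_left (PresentedMonoid.closure_range_of bsStep) v one
    (by rintro _ ⟨l, rfl⟩ v hv; exact bsGen_eq_of ▸ gen_mul l v hv)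

theorem pathDegBS_cons (E : TwoColouredGraph) (e : E.Edge) (x : List E.Edge) :
    pathDegBS E (e :: x) = bsGen (E.c e) * pathDegBS E x := by
  simp only [pathDegBS, List.map_cons, List.prod_cons]

theorem pathDegBS_map {F E : TwoColouredGraph} (f : CGMor F E) (x : List F.Edge) :
    pathDegBS E (x.map f.onE) = pathDegBS F x := by
  simp only [pathDegBS, List.map_map, Function.comp_def, f.map_c]

theorem IsPathFrom.map {F E : TwoColouredGraph} (f : CGMor F E) {v : F.V} {x : List F.Edge}
    (hx : IsPathFrom F v x) : IsPathFrom E (f.onV v) (x.map f.onE) := by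
  refine ⟨?_, List.isChain_map_of_isChain _ (fun e e' h => ?_) hx.2⟩
  · rintro _ he
    rw [List.head?_map, Option.mem_map] at he
    obtain ⟨e, he, rfl⟩ := he
    rw [f.map_r, hx.1 e he]
  · rw [f.map_s, f.map_r, h]

theorem exists_bsModel_path {w : BS} (u v : BS) (h : u * v ∣ w) :
    ∃ x, IsPathFrom (bsModel w) ⟨u, dvd_of_mul_right_dvd h⟩ x ∧
      pathDegBS (bsModel w) x = v := by
  induction v using BS.induction_on_gen_mul generalizing u with
  | one => exact ⟨[], ⟨by simp, List.isChain_nil⟩, rfl⟩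
  | gen_mul l v ih =>
    have h' : u * bsGen l * v ∣ w := (mul_assoc u _ _).symm ▸ h
    obtain ⟨x, ⟨hx_head, hx_chain⟩, hx_deg⟩ := ih (u * bsGen l) h'
    let e : (bsModel w).Edge := ⟨(u, l), dvd_of_mul_right_dvd h, dvd_of_mul_right_dvd h'⟩
    refine ⟨e :: x, ⟨by rintro _ ⟨⟩; rfl, List.isChain_cons.mpr ⟨?_, hx_chain⟩⟩, ?_⟩
    · exact fun e' he' => (hx_head e' he').symm
    · rw [pathDegBS_cons, hx_deg]
      rfl

theorem IsPathFrom.bsModel_getElem_fst {w : BS} {z : (bsModel w).V}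
    {x : List (bsModel w).Edge} (hx : IsPathFrom (bsModel w) z x) (n : ℕ) (hn : n < x.length) :
    x[n].1.1 = z.1 * pathDegBS (bsModel w) (x.take n) := by
  induction x generalizing z n with
  | nil => simp at hn
  | cons e x ih =>
    obtain ⟨hx_next, hx_chain⟩ := List.isChain_cons.mp hx.2
    have he : e.1.1 = z.1 := congrArg Subtype.val (hx.1 e rfl)
    cases n with
    | zero => simpa [pathDegBS] using he
    | succ n =>
      have hx' : IsPathFrom (bsModel w) ((bsModel w).s e) x :=
        ⟨fun y hy => (hx_next y hy).symm, hx_chain⟩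
      rw [List.getElem_cons_succ, ih hx' n (by simpa using hn), List.take_succ_cons,
        pathDegBS_cons, ← mul_assoc, ← he]
      rfl

theorem traversesBS_map_of_bsModel_path {E : TwoColouredGraph} {w : BS}
    (lam : CGMor (bsModel w) E) {x : List (bsModel w).Edge}
    (hx : IsPathFrom (bsModel w) ⟨1, one_dvd w⟩ x) (hdeg : pathDegBS (bsModel w) x = w) :
    TraversesBS E lam (lam.onV ⟨1, one_dvd w⟩) (x.map lam.onE) := by
  refine ⟨(pathDegBS_map lam x).trans hdeg, rfl, fun n hn => ?_⟩
  have hn' : n < x.length := by simpa using hn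
  simp only [List.get_eq_getElem, List.getElem_map]
  have hrange : pathDegBS E ((x.map lam.onE).take n) = x[n].1.1 := by
    rw [← List.map_take, pathDegBS_map, hx.bsModel_getElem_fst n hn', one_mul]
  exact congrArg lam.onE (Subtype.ext (Prod.ext hrange (lam.map_c _)))

theorem exists_traversal (E : TwoColouredGraph) (w : BS) (lam : CGMor (bsModel w) E) :
    ∃ (v : E.V) (x : List E.Edge), IsPathFrom E v x ∧ TraversesBS E lam v x := by
  obtain ⟨x, hx, hdeg⟩ := exists_bsModel_path (w := w) 1 w (by rw [one_mul])
  exact ⟨_, _, hx.map lam, traversesBS_map_of_bsModel_path lam hx hdeg⟩
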